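/- arXiv:2306.11903 — 7 statements merged into one kernel-verified Lean document; each statement's English description precedes it below -/
import Mathlib

section
/- Let d ∈ ℕ and let H₀, H₁ : EuclideanSpace ℝ (Fin d) → EuclideanSpace ℝ (Fin d) be twice continuously differentiable vector fields giving rise, for each h > 0, to a solution w_h : ℝ → EuclideanSpace ℝ (Fin d) of the modified equation ẇ(t) = H₀(w(t)) + h·H₁(w(t)) with w_h(0) = w₀ (i.e. HasDerivAt w_h (H₀(w_h t) + h • H₁(w_h t)) t for all t in [0,h]). Then, as h → 0⁺, w_h(h) = w₀ + h·H₀(w₀) + h²·(H₁(w₀) + (1/2)·(fderiv ℝ H₀ w₀)(H₀(w₀))) + O(h³). -/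
/-!
On a small ball around `w₀` the fields are bounded, they differ from their values at `w₀` by
`O(‖x - w₀‖)`, and `H₀` differs from its linearisation by `O(‖x - w₀‖²)`. A barrier argument
keeps the flow in that ball up to time `h`, so `w_h(t) - w₀ = O(h)` on `[0, h]`. Feeding this back
into the equation gives `w_h(t) = w₀ + t H₀(w₀) + O(h²)`, and one more round shows that `ẇ_h(t)`
differs by `O(h²)` from `H₀(w₀) + h H₁(w₀) + t ∇H₀(w₀) H₀(w₀)`, the derivative of the claimed
expansion; integrating over `[0, h]` leaves an `O(h³)` error.
-/

open Asymptotics Filter Metric Set Topology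

section

variable {E : Type*} [NormedAddCommGroup E] [NormedSpace ℝ E]

theorem norm_sub_le_mul_of_norm_deriv_le {f f' : ℝ → E} {a b C : ℝ}
    (hf : ∀ t ∈ Icc a b, HasDerivAt f (f' t) t)
    (bound : ∀ t ∈ Icc a b, ‖f' t‖ ≤ C) : ∀ t ∈ Icc a b, ‖f t - f a‖ ≤ C * (b - a) := by
  intro t ht
  have hC : 0 ≤ C := (norm_nonneg _).trans (bound a ⟨le_rfl, ht.1.trans ht.2⟩)
  refine (norm_image_sub_le_of_norm_deriv_le_segment' (fun s hs => (hf s hs).hasDerivWithinAt)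
    (fun s hs => bound s (Ico_subset_Icc_self hs)) t ht).trans ?_
  exact mul_le_mul_of_nonneg_left (by linarith [ht.2]) hC

theorem norm_sub_le_mul_of_norm_deriv_le_of_mem_closedBall {f f' : ℝ → E} {a b r C : ℝ}
    (hab : a < b) (hr : 0 ≤ r)
    (hf : ∀ t ∈ Icc a b, HasDerivAt f (f' t) t)
    (hbound : ∀ t ∈ Icc a b, ‖f t - f a‖ ≤ r → ‖f' t‖ ≤ C) (hC : C * (b - a) < r) :
    ∀ t ∈ Icc a b, ‖f t - f a‖ ≤ C * (t - a) := by
  have hba : 0 < b - a := sub_pos.2 hab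
  have hCr : C < r / (b - a) := (lt_div_iff₀ hba).2 hC
  have hbarrier_le : ∀ t ∈ Icc a b, r / (b - a) * (t - a) ≤ r := fun t ht => by
    rw [div_mul_eq_mul_div, div_le_iff₀ hba]
    exact mul_le_mul_of_nonneg_left (by linarith [ht.2]) hr
  -- `f` cannot reach the boundary of the ball before time `b`, since it moves slower than the
  -- barrier `t ↦ r (t - a) / (b - a)` while inside.
  have hstay : ∀ t ∈ Icc a b, ‖f t - f a‖ ≤ r / (b - a) * (t - a) := by
    refine image_norm_le_of_norm_deriv_right_lt_deriv_boundary (f := fun t => f t - f a)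
      (B' := fun _ => r / (b - a))
      (fun t ht => ((hf t ht).sub_const (f a)).continuousAt.continuousWithinAt)
      (fun t ht => ((hf t (Ico_subset_Icc_self ht)).sub_const (f a)).hasDerivWithinAt)
      (by simp) (fun t => ?_) (fun t ht heq => ?_)
    · simpa using ((hasDerivAt_id t).sub_const a).const_mul (r / (b - a))
    · have ht' := Ico_subset_Icc_self ht
      exact (hbound t ht' (heq.trans_le (hbarrier_le t ht'))).trans_lt hCr
  refine norm_image_sub_le_of_norm_deriv_le_segment'
    (fun t ht => (hf t ht).hasDerivWithinAt) (fun t ht => ?_)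
  have ht' := Ico_subset_Icc_self ht
  exact hbound t ht' ((hstay t ht').trans (hbarrier_le t ht'))

theorem ContDiffAt.isBigO_sub_sub_fderiv {F : Type*} [NormedAddCommGroup F] [NormedSpace ℝ F]
    {f : E → F} {x₀ : E} (hf : ContDiffAt ℝ 2 f x₀) :
    (fun x => f x - f x₀ - fderiv ℝ f x₀ (x - x₀)) =O[𝓝 x₀] fun x => ‖x - x₀‖ ^ 2 := by
  obtain ⟨c, hc0, hc⟩ := ((hf.fderiv_right (m := 1) (by norm_num)).differentiableAt
    one_ne_zero).hasFDerivAt.isBigO_sub.exists_nonneg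
  obtain ⟨ε, hε, hball⟩ := eventually_nhds_iff_ball.1
    (hc.bound.and (hf.eventually (by simp)))
  refine IsBigO.of_bound c (eventually_of_mem (ball_mem_nhds x₀ hε) fun x hx => ?_)
  have hsub : closedBall x₀ ‖x - x₀‖ ⊆ ball x₀ ε :=
    closedBall_subset_ball (by rwa [← dist_eq_norm, ← mem_ball])
  have key := (convex_closedBall x₀ ‖x - x₀‖).norm_image_sub_le_of_norm_hasFDerivWithin_le'
    (f' := fderiv ℝ f) (fun y hy =>
      ((hball y (hsub hy)).2.differentiableAt (by norm_num)).hasFDerivAt.hasFDerivWithinAt)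
    (fun y hy => (hball y (hsub hy)).1.trans (mul_le_mul_of_nonneg_left
      (by rwa [← dist_eq_norm, ← mem_closedBall]) hc0))
    (mem_closedBall_self (norm_nonneg _)) (mem_closedBall.2 (dist_eq_norm x x₀).le)
  rwa [norm_pow, norm_norm, sq, ← mul_assoc]

structure ModifiedFieldBounds (H₀ H₁ : E → E) (φ : E →L[ℝ] E) (w₀ : E) (r M L K : ℝ) : Prop where
  radius_pos : 0 < r
  lip_nonneg : 0 ≤ L
  taylor_nonneg : 0 ≤ K
  norm_le₀ : ∀ x ∈ closedBall w₀ r, ‖H₀ x‖ ≤ M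
  norm_le₁ : ∀ x ∈ closedBall w₀ r, ‖H₁ x‖ ≤ M
  norm_sub_le₀ : ∀ x ∈ closedBall w₀ r, ‖H₀ x - H₀ w₀‖ ≤ L * ‖x - w₀‖
  norm_sub_le₁ : ∀ x ∈ closedBall w₀ r, ‖H₁ x - H₁ w₀‖ ≤ L * ‖x - w₀‖
  taylor : ∀ x ∈ closedBall w₀ r, ‖H₀ x - H₀ w₀ - φ (x - w₀)‖ ≤ K * ‖x - w₀‖ ^ 2

theorem exists_modifiedFieldBounds {H₀ H₁ : E → E} {w₀ : E} (hH₀ : ContDiffAt ℝ 2 H₀ w₀)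
    (hH₁ : DifferentiableAt ℝ H₁ w₀) :
    ∃ r M L K, ModifiedFieldBounds H₀ H₁ (fderiv ℝ H₀ w₀) w₀ r M L K := by
  obtain ⟨L₀, hL₀, h₀⟩ := (hH₀.differentiableAt (by norm_num)).hasFDerivAt.isBigO_sub.exists_nonneg
  obtain ⟨L₁, hL₁, h₁⟩ := hH₁.hasFDerivAt.isBigO_sub.exists_nonneg
  obtain ⟨K, hK, hT⟩ := hH₀.isBigO_sub_sub_fderiv.exists_nonneg
  obtain ⟨r, hr, hball⟩ := nhds_basis_closedBall.eventually_iff.1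
    (h₀.bound.and (h₁.bound.and hT.bound))
  set L := max L₀ L₁
  have hL : 0 ≤ L := hL₀.trans (le_max_left _ _)
  have hsub₀ : ∀ x ∈ closedBall w₀ r, ‖H₀ x - H₀ w₀‖ ≤ L * ‖x - w₀‖ := fun x hx =>
    (hball hx).1.trans (mul_le_mul_of_nonneg_right (le_max_left _ _) (norm_nonneg _))
  have hsub₁ : ∀ x ∈ closedBall w₀ r, ‖H₁ x - H₁ w₀‖ ≤ L * ‖x - w₀‖ := fun x hx =>
    (hball hx).2.1.trans (mul_le_mul_of_nonneg_right (le_max_right _ _) (norm_nonneg _))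
  have hLr : ∀ x ∈ closedBall w₀ r, L * ‖x - w₀‖ ≤ L * r := fun x hx =>
    mul_le_mul_of_nonneg_left (mem_closedBall_iff_norm.1 hx) hL
  refine ⟨r, max ‖H₀ w₀‖ ‖H₁ w₀‖ + L * r, L, K, hr, hL, hK, fun x hx => ?_, fun x hx => ?_,
    hsub₀, hsub₁, fun x hx => ?_⟩
  · exact (norm_le_insert' _ _).trans
      (add_le_add (le_max_left _ _) ((hsub₀ x hx).trans (hLr x hx)))
  · exact (norm_le_insert' _ _).trans
      (add_le_add (le_max_right _ _) ((hsub₁ x hx).trans (hLr x hx)))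
  · simpa using (hball hx).2.2

namespace ModifiedFieldBounds

variable {H₀ H₁ : E → E} {φ : E →L[ℝ] E} {w₀ : E} {r M L K h : ℝ} {u : ℝ → E}

theorem bound_nonneg (hB : ModifiedFieldBounds H₀ H₁ φ w₀ r M L K) : 0 ≤ M :=
  (norm_nonneg _).trans (hB.norm_le₀ w₀ (mem_closedBall_self hB.radius_pos.le))

theorem norm_flow_sub_le (hB : ModifiedFieldBounds H₀ H₁ φ w₀ r M L K) (hh : 0 < h)
    (hh1 : h ≤ 1) (hhr : 2 * M * h < r) (hu0 : u 0 = w₀)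
    (hu : ∀ t ∈ Icc 0 h, HasDerivAt u (H₀ (u t) + h • H₁ (u t)) t) :
    ∀ t ∈ Icc 0 h, ‖u t - w₀‖ ≤ 2 * M * h := by
  have hfield : ∀ t ∈ Icc 0 h, ‖u t - u 0‖ ≤ r → ‖H₀ (u t) + h • H₁ (u t)‖ ≤ 2 * M := by
    intro t _ hut
    rw [hu0, ← mem_closedBall_iff_norm] at hut
    calc ‖H₀ (u t) + h • H₁ (u t)‖ ≤ ‖H₀ (u t)‖ + h * ‖H₁ (u t)‖ := by
          simpa [norm_smul, abs_of_pos hh] using norm_add_le (H₀ (u t)) (h • H₁ (u t))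
      _ ≤ M + M := add_le_add (hB.norm_le₀ _ hut)
          ((mul_le_of_le_one_left (norm_nonneg _) hh1).trans (hB.norm_le₁ _ hut))
      _ = 2 * M := by ring
  intro t ht
  have htrap := norm_sub_le_mul_of_norm_deriv_le_of_mem_closedBall hh hB.radius_pos.le hu hfield
    (by simpa using hhr) t ht
  rw [hu0, sub_zero] at htrap
  exact htrap.trans (mul_le_mul_of_nonneg_left ht.2 (by linarith [hB.bound_nonneg]))

theorem flow_mem_closedBall (hB : ModifiedFieldBounds H₀ H₁ φ w₀ r M L K) (hh : 0 < h)
    (hh1 : h ≤ 1) (hhr : 2 * M * h < r) (hu0 : u 0 = w₀)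
    (hu : ∀ t ∈ Icc 0 h, HasDerivAt u (H₀ (u t) + h • H₁ (u t)) t) :
    ∀ t ∈ Icc 0 h, u t ∈ closedBall w₀ r := fun t ht =>
  mem_closedBall_iff_norm.2 ((hB.norm_flow_sub_le hh hh1 hhr hu0 hu t ht).trans hhr.le)

theorem norm_flow_sub_sub_le (hB : ModifiedFieldBounds H₀ H₁ φ w₀ r M L K) (hh : 0 < h)
    (hh1 : h ≤ 1) (hhr : 2 * M * h < r) (hu0 : u 0 = w₀)
    (hu : ∀ t ∈ Icc 0 h, HasDerivAt u (H₀ (u t) + h • H₁ (u t)) t) :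
    ∀ t ∈ Icc 0 h, ‖u t - w₀ - t • H₀ w₀‖ ≤ (2 * L * M + M) * h ^ 2 := by
  have hderiv : ∀ t ∈ Icc 0 h, HasDerivAt (fun s => u s - s • H₀ w₀)
      (H₀ (u t) + h • H₁ (u t) - H₀ w₀) t := fun t ht => by
    simpa using (hu t ht).fun_sub ((hasDerivAt_id' t).smul_const (H₀ w₀))
  have hbound : ∀ t ∈ Icc 0 h, ‖H₀ (u t) + h • H₁ (u t) - H₀ w₀‖ ≤ (2 * L * M + M) * h := by
    intro t ht
    have hut := hB.flow_mem_closedBall hh hh1 hhr hu0 hu t ht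
    calc ‖H₀ (u t) + h • H₁ (u t) - H₀ w₀‖ ≤ L * ‖u t - w₀‖ + h * M := by
          rw [add_sub_right_comm]
          refine (norm_add_le _ _).trans (add_le_add (hB.norm_sub_le₀ _ hut) ?_)
          rw [norm_smul, Real.norm_of_nonneg hh.le]
          exact mul_le_mul_of_nonneg_left (hB.norm_le₁ _ hut) hh.le
      _ ≤ L * (2 * M * h) + h * M := by
          gcongr
          · exact hB.lip_nonneg
          · exact hB.norm_flow_sub_le hh hh1 hhr hu0 hu t ht
      _ = (2 * L * M + M) * h := by ring
  intro t ht
  have hmvt := norm_sub_le_mul_of_norm_deriv_le hderiv hbound t ht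
  simpa [hu0, sub_right_comm, sq, mul_assoc] using hmvt

theorem norm_flow_sub_taylor_le (hB : ModifiedFieldBounds H₀ H₁ φ w₀ r M L K) (hh : 0 < h)
    (hh1 : h ≤ 1) (hhr : 2 * M * h < r) (hu0 : u 0 = w₀)
    (hu : ∀ t ∈ Icc 0 h, HasDerivAt u (H₀ (u t) + h • H₁ (u t)) t) :
    ‖u h - w₀ - h • H₀ w₀ - h ^ 2 • (H₁ w₀ + (1 / 2 : ℝ) • φ (H₀ w₀))‖
      ≤ (4 * K * M ^ 2 + ‖φ‖ * (2 * L * M + M) + 2 * L * M) * h ^ 3 := by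
  set ψ : ℝ → E := fun t => u t - t • H₀ w₀ - t • h • H₁ w₀ - (t ^ 2 / 2) • φ (H₀ w₀)
  have hderiv : ∀ t ∈ Icc 0 h, HasDerivAt ψ
      (H₀ (u t) + h • H₁ (u t) - H₀ w₀ - h • H₁ w₀ - t • φ (H₀ w₀)) t := fun t ht => by
    have hsq : HasDerivAt (fun s : ℝ => s ^ 2 / 2) t t := by
      simpa using (hasDerivAt_pow 2 t).div_const 2
    simpa using (((hu t ht).fun_sub ((hasDerivAt_id' t).smul_const (H₀ w₀))).fun_sub
      ((hasDerivAt_id' t).smul_const (h • H₁ w₀))).fun_sub (hsq.smul_const (φ (H₀ w₀)))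
  have hbound : ∀ t ∈ Icc 0 h,
      ‖H₀ (u t) + h • H₁ (u t) - H₀ w₀ - h • H₁ w₀ - t • φ (H₀ w₀)‖
        ≤ (4 * K * M ^ 2 + ‖φ‖ * (2 * L * M + M) + 2 * L * M) * h ^ 2 := by
    intro t ht
    have hut := hB.flow_mem_closedBall hh hh1 hhr hu0 hu t ht
    have h₁ := hB.norm_flow_sub_le hh hh1 hhr hu0 hu t ht
    have hsplit : H₀ (u t) + h • H₁ (u t) - H₀ w₀ - h • H₁ w₀ - t • φ (H₀ w₀)
        = (H₀ (u t) - H₀ w₀ - φ (u t - w₀)) + φ (u t - w₀ - t • H₀ w₀)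
          + h • (H₁ (u t) - H₁ w₀) := by
      simp only [map_sub, map_smul]
      module
    have hT : ‖H₀ (u t) - H₀ w₀ - φ (u t - w₀)‖ ≤ 4 * K * M ^ 2 * h ^ 2 :=
      calc _ ≤ K * ‖u t - w₀‖ ^ 2 := hB.taylor _ hut
        _ ≤ K * (2 * M * h) ^ 2 := by gcongr; exact hB.taylor_nonneg
        _ = 4 * K * M ^ 2 * h ^ 2 := by ring
    have hφ : ‖φ (u t - w₀ - t • H₀ w₀)‖ ≤ ‖φ‖ * (2 * L * M + M) * h ^ 2 :=
      calc _ ≤ ‖φ‖ * ‖u t - w₀ - t • H₀ w₀‖ := φ.le_opNorm _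
        _ ≤ ‖φ‖ * ((2 * L * M + M) * h ^ 2) :=
          mul_le_mul_of_nonneg_left (hB.norm_flow_sub_sub_le hh hh1 hhr hu0 hu t ht)
            (norm_nonneg _)
        _ = ‖φ‖ * (2 * L * M + M) * h ^ 2 := by ring
    have hH₁ : ‖h • (H₁ (u t) - H₁ w₀)‖ ≤ 2 * L * M * h ^ 2 :=
      calc _ = h * ‖H₁ (u t) - H₁ w₀‖ := by rw [norm_smul, Real.norm_of_nonneg hh.le]
        _ ≤ h * (L * (2 * M * h)) := by
          gcongr
          exact (hB.norm_sub_le₁ _ hut).trans (mul_le_mul_of_nonneg_left h₁ hB.lip_nonneg)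
        _ = 2 * L * M * h ^ 2 := by ring
    rw [hsplit]
    exact norm_add₃_le.trans (by linarith)
  have hψ : ψ h - ψ 0 = u h - w₀ - h • H₀ w₀ - h ^ 2 • (H₁ w₀ + (1 / 2 : ℝ) • φ (H₀ w₀)) := by
    simp only [ψ, hu0]
    module
  have hmvt := norm_sub_le_mul_of_norm_deriv_le hderiv hbound h (right_mem_Icc.2 hh.le)
  rw [hψ] at hmvt
  exact hmvt.trans_eq (by ring)

end ModifiedFieldBounds

end

/-- **Taylor expansion of the solution of the modified equation** `ẇ = H₀(w) + h·H₁(w)`: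
as `h → 0⁺`, `w_h(h) = w₀ + h·H₀(w₀) + h²·(H₁(w₀) + ½(∇H₀(w₀))(H₀(w₀))) + O(h³)`. -/
theorem stmt_1 (d : ℕ) (H₀ H₁ : EuclideanSpace ℝ (Fin d) → EuclideanSpace ℝ (Fin d))
    (hH₀ : ContDiff ℝ 2 H₀) (hH₁ : ContDiff ℝ 2 H₁)
    (w₀ : EuclideanSpace ℝ (Fin d))
    (w : ℝ → ℝ → EuclideanSpace ℝ (Fin d))
    (hw0 : ∀ h : ℝ, 0 < h → w h 0 = w₀)
    (hw : ∀ h : ℝ, 0 < h → ∀ t ∈ Set.Icc (0 : ℝ) h,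
      HasDerivAt (w h) (H₀ (w h t) + h • H₁ (w h t)) t) :
    (fun h : ℝ =>
        w h h - w₀ - h • H₀ w₀
          - h ^ 2 • (H₁ w₀ + (1 / 2 : ℝ) • (fderiv ℝ H₀ w₀ (H₀ w₀))))
      =O[nhdsWithin 0 (Set.Ioi 0)] (fun h : ℝ => h ^ 3) := by
  obtain ⟨r, M, L, K, hB⟩ :=
    exists_modifiedFieldBounds hH₀.contDiffAt (hH₁.differentiable (by norm_num) w₀)
  have hsmall : ∀ᶠ h in 𝓝[>] (0 : ℝ), 0 < h ∧ h ≤ 1 ∧ 2 * M * h < r :=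
    eventually_mem_nhdsWithin.and <| eventually_nhdsWithin_of_eventually_nhds <|
      (eventually_le_nhds one_pos).and <|
        (continuous_const_mul (2 * M)).tendsto' 0 0 (mul_zero _) |>.eventually_lt_const
          hB.radius_pos
  refine isBigO_iff.2
    ⟨4 * K * M ^ 2 + ‖fderiv ℝ H₀ w₀‖ * (2 * L * M + M) + 2 * L * M, ?_⟩
  filter_upwards [hsmall] with h ⟨hh, hh1, hhr⟩
  rw [Real.norm_of_nonneg (pow_nonneg hh.le 3)]
  exact hB.norm_flow_sub_taylor_le hh hh1 hhr (hw0 h hh) (hw h hh)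
end

section
/- Let d ∈ ℕ, let L₁, L₂ : EuclideanSpace ℝ (Fin d) → ℝ be twice continuously differentiable and let α ∈ ℝ. Set F = −gradient L₁ and G = −gradient L₂, and define the Lie bracket [∇L₁, ∇L₂](w) = (fderiv ℝ (gradient L₂) w)(gradient L₁ w) − (fderiv ℝ (gradient L₁) w)(gradient L₂ w). Then for every w: α·(fderiv ℝ G w)(F(w)) − (1/2)·(fderiv ℝ (F + α•G) w)((F + α•G)(w)) = (α/2)·[∇L₁, ∇L₂](w) − gradient (fun u => (1/4)·‖gradient L₁ u‖² + (α²/4)·‖gradient L₂ u‖²) w. -/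
/-!
Symmetry of second derivatives makes the Hessian `D(∇L)` self-adjoint, so the gradient of
`‖∇L‖²` is `2 D(∇L)(∇L)`. Once the regularizer's gradient is rewritten this way, both sides are
linear combinations of `D(∇Lᵢ)(∇Lⱼ)`: in `½ D(F+αG)(F+αG)` the mixed terms `α/2 (D(∇L₁)∇L₂ +
D(∇L₂)∇L₁)` combine with `α D(∇L₂)∇L₁` into the bracket, and the pure terms are the gradient of
the regularizer.
-/

open InnerProductSpace

section

variable {E : Type*} [NormedAddCommGroup E] [InnerProductSpace ℝ E] [CompleteSpace E]

lemma HasGradientAt.add {f g : E → ℝ} {f' g' x : E} (hf : HasGradientAt f f' x)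
    (hg : HasGradientAt g g' x) :
    HasGradientAt (fun u => f u + g u) (f' + g') x := by
  rw [hasGradientAt_iff_hasFDerivAt, map_add]
  exact hf.hasFDerivAt.add hg.hasFDerivAt

lemma HasGradientAt.const_mul {f : E → ℝ} {f' x : E} (c : ℝ) (hf : HasGradientAt f f' x) :
    HasGradientAt (fun u => c * f u) (c • f') x := by
  rw [hasGradientAt_iff_hasFDerivAt, map_smul]
  exact hf.hasFDerivAt.const_mul c

variable {L : E → ℝ}

lemma ContDiff.contDiff_one_gradient (hL : ContDiff ℝ 2 L) : ContDiff ℝ 1 (gradient L) :=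
  (toDual ℝ E).symm.contDiff.comp (hL.fderiv_right (by norm_num))

lemma inner_fderiv_gradient (hL : ContDiff ℝ 2 L) (w v x : E) :
    inner ℝ (fderiv ℝ (gradient L) w v) x = fderiv ℝ (fderiv ℝ L) w v x := by
  have hd : DifferentiableAt ℝ (fderiv ℝ L) w :=
    (hL.fderiv_right (m := 1) (by norm_num)).differentiable one_ne_zero w
  rw [show gradient L = (toDual ℝ E).symm ∘ fderiv ℝ L from rfl,
    LinearIsometryEquiv.comp_fderiv]
  simp only [Function.comp_apply, ContinuousLinearMap.coe_comp]
  exact toDual_symm_apply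

lemma inner_fderiv_gradient_comm (hL : ContDiff ℝ 2 L) (w v x : E) :
    inner ℝ (fderiv ℝ (gradient L) w v) x = inner ℝ (fderiv ℝ (gradient L) w x) v := by
  rw [inner_fderiv_gradient hL, inner_fderiv_gradient hL]
  exact hL.contDiffAt.isSymmSndFDerivAt (by norm_num) v x

lemma hasGradientAt_norm_sq_gradient (hL : ContDiff ℝ 2 L) (w : E) :
    HasGradientAt (fun u => ‖gradient L u‖ ^ 2)
      ((2 : ℝ) • fderiv ℝ (gradient L) w (gradient L w)) w := by
  have hg := ((hL.contDiff_one_gradient.differentiable one_ne_zero) w).hasFDerivAt.norm_sq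
  refine hasGradientAt_iff_hasFDerivAt.2 (hg.congr_fderiv ?_)
  ext v
  simp only [map_smul, smul_apply, toDual_apply_apply,
    ContinuousLinearMap.comp_apply, innerSL_apply_apply]
  rw [inner_fderiv_gradient_comm hL, real_inner_comm, two_smul, two_smul]

end

/-- **Matching condition for the first-order correction of the modified equation.**
With `F = −∇L₁`, `G = −∇L₂` and the Lie bracket
`[∇L₁,∇L₂](w) = (∇(∇L₂)(w))(∇L₁(w)) − (∇(∇L₁)(w))(∇L₂(w))`, for every `w`:
`α(∇G(w))(F(w)) − ½(∇(F+αG)(w))((F+αG)(w))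
  = (α/2)[∇L₁,∇L₂](w) − ∇((1/4)‖∇L₁‖² + (α²/4)‖∇L₂‖²)(w)`. -/
theorem stmt_2 (d : ℕ) (L₁ L₂ : EuclideanSpace ℝ (Fin d) → ℝ)
    (hL₁ : ContDiff ℝ 2 L₁) (hL₂ : ContDiff ℝ 2 L₂) (α : ℝ)
    (F G : EuclideanSpace ℝ (Fin d) → EuclideanSpace ℝ (Fin d))
    (hF : F = fun w => -gradient L₁ w) (hG : G = fun w => -gradient L₂ w)
    (w : EuclideanSpace ℝ (Fin d)) :
    α • (fderiv ℝ G w (F w)) - (1 / 2 : ℝ) • (fderiv ℝ (F + α • G) w ((F + α • G) w))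
      = (α / 2) • (fderiv ℝ (gradient L₂) w (gradient L₁ w)
            - fderiv ℝ (gradient L₁) w (gradient L₂ w))
        - gradient (fun u => (1 / 4 : ℝ) * ‖gradient L₁ u‖ ^ 2
            + (α ^ 2 / 4) * ‖gradient L₂ u‖ ^ 2) w := by
  subst hF hG
  have hF' := (hL₁.contDiff_one_gradient.differentiable one_ne_zero w).fun_neg
  have hG' := (hL₂.contDiff_one_gradient.differentiable one_ne_zero w).fun_neg
  have hreg := (((hasGradientAt_norm_sq_gradient hL₁ w).const_mul (1 / 4)).add
    ((hasGradientAt_norm_sq_gradient hL₂ w).const_mul (α ^ 2 / 4))).gradient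
  rw [hreg, fderiv_add hF' (hG'.const_smul α), fderiv_const_smul hG', fderiv_fun_neg,
    fderiv_fun_neg]
  simp only [Pi.add_apply, Pi.smul_apply, add_apply, neg_apply,
    smul_apply, map_add, map_neg, map_smul]
  module
end

section
/- Let d_s, m, n ∈ ℕ with n ≥ 1. Let L_B : (Fin n → EuclideanSpace ℝ (Fin d_s)) × EuclideanSpace ℝ (Fin m) → ℝ be differentiable and invariant under permutations of the n blocks, i.e. L_B(θ ∘ σ, η) = L_B(θ, η) for every permutation σ of Fin n. Define L_S : EuclideanSpace ℝ (Fin d_s) → ℝ by L_S(θ) = L_B(fun _ => θ, 0). Then for every θ and every i : Fin n, the partial gradient of L_B with respect to the i-th block, evaluated at the diagonal point (fun _ => θ, 0), equals (1/n) · gradient L_S θ. -/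
/-!
Differentiating `L_B(θ,…,θ,0)` along the diagonal gives, by the chain rule, the sum of the `n`
partial derivatives of `L_B` at the diagonal point. That point is fixed by every permutation of the
blocks, so differentiating the permutation invariance of `L_B` there shows that all `n` partial
derivatives coincide; hence the derivative of `L_S` is `n` times any one of them.
-/

theorem ContinuousLinearEquiv.piCongrLeft_const_apply {𝕜 ι E : Type*} [Semiring 𝕜]
    [AddCommMonoid E] [Module 𝕜 E] [TopologicalSpace E] (σ : Equiv.Perm ι) (θ : ι → E) :
    ContinuousLinearEquiv.piCongrLeft 𝕜 (fun _ : ι => E) σ θ = θ ∘ σ.symm := by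
  ext k
  simp [ContinuousLinearEquiv.piCongrLeft, Equiv.piCongrLeft_apply_eq_cast]

theorem Pi.single_comp_swap {ι E : Type*} [DecidableEq ι] [Zero E] (i j : ι) (v : E) :
    Pi.single i v ∘ Equiv.swap i j = Pi.single j v := by
  ext k
  simp [Pi.single_apply, Equiv.swap_apply_eq_iff]

section PermInvariant

variable {𝕜 ι E F : Type*} [NontriviallyNormedField 𝕜] [Fintype ι] [DecidableEq ι]
  [NormedAddCommGroup E] [NormedSpace 𝕜 E] [NormedAddCommGroup F] [NormedSpace 𝕜 F]

theorem hasFDerivAt_comp_update {g : (ι → E) → F} {θ : ι → E} (hg : DifferentiableAt 𝕜 g θ)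
    (i : ι) :
    HasFDerivAt (fun y => g (Function.update θ i y))
      ((fderiv 𝕜 g θ).comp (ContinuousLinearMap.single 𝕜 (fun _ => E) i)) (θ i) := by
  have hupdate : HasFDerivAt (Function.update θ i)
      (ContinuousLinearMap.single 𝕜 (fun _ => E) i) (θ i) := by
    convert hasFDerivAt_update θ (θ i) using 1
    ext v j
    rcases eq_or_ne j i with rfl | hji <;> simp [*]
  have hg' : HasFDerivAt g (fderiv 𝕜 g θ) (Function.update θ i (θ i)) := by
    simpa using hg.hasFDerivAt
  exact hg'.comp (θ i) hupdate

theorem hasFDerivAt_comp_const {g : (ι → E) → F} {x : E} (hg : DifferentiableAt 𝕜 g fun _ => x) :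
    HasFDerivAt (fun y => g fun _ => y)
      (∑ j, (fderiv 𝕜 g fun _ => x).comp (ContinuousLinearMap.single 𝕜 (fun _ => E) j)) x := by
  have hconst : HasFDerivAt (fun y : E => fun _ : ι => y)
      (ContinuousLinearMap.pi fun _ => ContinuousLinearMap.id 𝕜 E) x :=
    (ContinuousLinearMap.pi fun _ => ContinuousLinearMap.id 𝕜 E).hasFDerivAt
  refine (hg.hasFDerivAt.comp x hconst).congr_fderiv (ContinuousLinearMap.ext fun v => ?_)
  rw [FunLike.coe_sum, Finset.sum_apply]
  exact (ContinuousLinearMap.sum_comp_single 𝕜 (fun _ => E) _ fun _ => v).symm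

theorem fderiv_apply_single_eq_of_perm_invariant {g : (ι → E) → F}
    (hg : ∀ (θ : ι → E) (σ : Equiv.Perm ι), g (θ ∘ σ) = g θ) (x : E) (i j : ι) (v : E) :
    fderiv 𝕜 g (fun _ => x) (Pi.single i v) = fderiv 𝕜 g (fun _ => x) (Pi.single j v) := by
  let P := ContinuousLinearEquiv.piCongrLeft 𝕜 (fun _ : ι => E) (Equiv.swap i j)
  have hP : ∀ θ, P θ = θ ∘ Equiv.swap i j := ContinuousLinearEquiv.piCongrLeft_const_apply _
  have hgP : g ∘ P = g := funext fun θ => by simp [hP, hg]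
  have hxP : P (fun _ => x) = fun _ => x := by rw [hP]; rfl
  have hfderiv : fderiv 𝕜 g (fun _ => x)
      = (fderiv 𝕜 g fun _ => x).comp (P : (ι → E) →L[𝕜] ι → E) := by
    simpa only [hgP, hxP] using P.comp_right_fderiv (f := g) (x := fun _ => x)
  simpa only [ContinuousLinearMap.comp_apply, ContinuousLinearEquiv.coe_coe, hP,
    Pi.single_comp_swap] using DFunLike.congr_fun hfderiv (Pi.single i v)

theorem fderiv_comp_const_eq_card_smul_of_perm_invariant {g : (ι → E) → F}
    (hg : ∀ (θ : ι → E) (σ : Equiv.Perm ι), g (θ ∘ σ) = g θ) {x : E}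
    (hd : DifferentiableAt 𝕜 g fun _ => x) (i : ι) :
    fderiv 𝕜 (fun y => g fun _ => y) x
      = Fintype.card ι • fderiv 𝕜 (fun y => g (Function.update (fun _ => x) i y)) x := by
  have hpartial : ∀ j, (fderiv 𝕜 g fun _ => x).comp (ContinuousLinearMap.single 𝕜 (fun _ => E) j)
      = (fderiv 𝕜 g fun _ => x).comp (ContinuousLinearMap.single 𝕜 (fun _ => E) i) :=
    fun j => ContinuousLinearMap.ext (fderiv_apply_single_eq_of_perm_invariant hg x j i)
  rw [(hasFDerivAt_comp_const hd).fderiv, (hasFDerivAt_comp_update hd i).fderiv,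
    Finset.sum_congr rfl fun j _ => hpartial j, Finset.sum_const, Finset.card_univ]

end PermInvariant

theorem gradient_comp_const_eq_card_smul_of_perm_invariant {𝕜 ι E : Type*} [RCLike 𝕜] [Fintype ι]
    [DecidableEq ι] [NormedAddCommGroup E] [InnerProductSpace 𝕜 E] [CompleteSpace E]
    {g : (ι → E) → 𝕜} (hg : ∀ (θ : ι → E) (σ : Equiv.Perm ι), g (θ ∘ σ) = g θ) {x : E}
    (hd : DifferentiableAt 𝕜 g fun _ => x) (i : ι) :
    gradient (fun y => g fun _ => y) x
      = Fintype.card ι • gradient (fun y => g (Function.update (fun _ => x) i y)) x := by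
  rw [gradient, gradient, fderiv_comp_const_eq_card_smul_of_perm_invariant hg hd i, map_nsmul]

theorem stmt_5_general (d_s m n : ℕ)
    (L_B : (Fin n → EuclideanSpace ℝ (Fin d_s)) × EuclideanSpace ℝ (Fin m) → ℝ)
    (hdiff : Differentiable ℝ L_B)
    (hsym : ∀ (θ : Fin n → EuclideanSpace ℝ (Fin d_s)) (η : EuclideanSpace ℝ (Fin m))
      (σ : Equiv.Perm (Fin n)), L_B (θ ∘ σ, η) = L_B (θ, η))
    (L_S : EuclideanSpace ℝ (Fin d_s) → ℝ)
    (hLS : L_S = fun θ => L_B (fun _ => θ, 0))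
    (θ : EuclideanSpace ℝ (Fin d_s)) (i : Fin n) :
    gradient (fun θi => L_B (Function.update (fun _ => θ) i θi, 0)) θ
      = (1 / (n : ℝ)) • gradient L_S θ := by
  have hn : (n : ℝ) ≠ 0 := Nat.cast_ne_zero.mpr i.pos.ne'
  have hd : DifferentiableAt ℝ (fun θ' => L_B (θ', 0)) fun _ => θ :=
    (hdiff _).comp _ (differentiableAt_id.prodMk (differentiableAt_const _))
  have hscaled := gradient_comp_const_eq_card_smul_of_perm_invariant
    (fun θ' σ => hsym θ' 0 σ) hd i
  rw [hLS, hscaled, Fintype.card_fin, ← Nat.cast_smul_eq_nsmul ℝ, smul_smul,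
    one_div_mul_cancel hn, one_smul]

/-- **Scaled gradient lemma.** If the big-model loss `L_B` on
`(Fin n → ℝ^{d_s}) × ℝ^m` is differentiable and invariant under permutations of the
`n` parameter blocks, and `L_S(θ) = L_B(θ,…,θ,0)`, then the partial gradient of `L_B`
with respect to the `i`-th block at the diagonal point `(θ,…,θ,0)` equals
`(1/n)·∇L_S(θ)`. -/
theorem stmt_5 (d_s m n : ℕ) (hn : 1 ≤ n)
    (L_B : (Fin n → EuclideanSpace ℝ (Fin d_s)) × EuclideanSpace ℝ (Fin m) → ℝ)
    (hdiff : Differentiable ℝ L_B)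
    (hsym : ∀ (θ : Fin n → EuclideanSpace ℝ (Fin d_s)) (η : EuclideanSpace ℝ (Fin m))
      (σ : Equiv.Perm (Fin n)), L_B (θ ∘ σ, η) = L_B (θ, η))
    (L_S : EuclideanSpace ℝ (Fin d_s) → ℝ)
    (hLS : L_S = fun θ => L_B (fun _ => θ, 0))
    (θ : EuclideanSpace ℝ (Fin d_s)) (i : Fin n) :
    gradient (fun θi => L_B (Function.update (fun _ => θ) i θi, 0)) θ
      = (1 / (n : ℝ)) • gradient L_S θ :=
  stmt_5_general d_s m n L_B hdiff hsym L_S hLS θ i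
end

section
/- Let p, q, k ∈ ℕ, let y : Fin p → ℝ be fixed, and let Ψ : ((Fin q ⊕ Fin q) → ℝ) → ℝ be differentiable. Define Φ : Matrix (Fin p ⊕ Fin p) (Fin q ⊕ Fin q) ℝ → ℝ by Φ(A) = Ψ(Matrix.vecMul (Sum.elim y y) A). Then for every matrix A, every i : Fin p and every column index c : Fin q ⊕ Fin q, the partial derivative of Φ with respect to the entry A (Sum.inl i) c equals the partial derivative of Φ with respect to the entry A (Sum.inr i) c. -/
namespace Matrix

theorem vecMul_single {m n α : Type*} [Fintype m] [DecidableEq m] [DecidableEq n]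
    [NonUnitalNonAssocSemiring α] (v : m → α) (i : m) (j : n) (b : α) :
    v ᵥ* single i j b = Pi.single j (v i * b) := by
  ext k
  by_cases hk : k = j
  · subst hk
    simp [vecMul, dotProduct, single]
  · simp [vecMul, dotProduct, single, Ne.symm hk, hk]

theorem sumElim_self_vecMul_single_inl_eq_inr {m n α : Type*} [Fintype m] [DecidableEq m]
    [DecidableEq n] [NonUnitalNonAssocSemiring α] (y : m → α) (i : m) (j : n) (b : α) :
    Sum.elim y y ᵥ* single (Sum.inl i) j b = Sum.elim y y ᵥ* single (Sum.inr i) j b := by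
  rw [vecMul_single, vecMul_single, Sum.elim_inl, Sum.elim_inr]

end Matrix

theorem stmt_9_general (p q : ℕ) (y : Fin p → ℝ)
    (Ψ : ((Fin q ⊕ Fin q) → ℝ) → ℝ)
    (Φ : Matrix (Fin p ⊕ Fin p) (Fin q ⊕ Fin q) ℝ → ℝ)
    (hΦ : Φ = fun A => Ψ (Matrix.vecMul (Sum.elim y y) A))
    (A : Matrix (Fin p ⊕ Fin p) (Fin q ⊕ Fin q) ℝ) (i : Fin p) (c : Fin q ⊕ Fin q) :
    deriv (fun t : ℝ => Φ (A + t • Matrix.single (Sum.inl i) c 1)) 0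
      = deriv (fun t : ℝ => Φ (A + t • Matrix.single (Sum.inr i) c 1)) 0 := by
  subst hΦ
  simp only [Matrix.vecMul_add, Matrix.vecMul_smul, Matrix.sumElim_self_vecMul_single_inl_eq_inr]

/-- **Same gradient lemma (abstract form).** If the loss `Φ` of the fused model factors
through the product of the duplicated hidden representation `(y, y)` with the fused
weight matrix `A`, then the partial derivative of `Φ` with respect to an entry in the
bottom row-block equals the partial derivative with respect to the corresponding entry
in the top row-block in the same column. The partial derivative with respect to an entry
is the derivative of `t ↦ Φ(A + t • stdBasisMatrix)` at `t = 0`. -/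
theorem stmt_9 (p q k : ℕ) (y : Fin p → ℝ)
    (Ψ : ((Fin q ⊕ Fin q) → ℝ) → ℝ) (hΨ : Differentiable ℝ Ψ)
    (Φ : Matrix (Fin p ⊕ Fin p) (Fin q ⊕ Fin q) ℝ → ℝ)
    (hΦ : Φ = fun A => Ψ (Matrix.vecMul (Sum.elim y y) A))
    (A : Matrix (Fin p ⊕ Fin p) (Fin q ⊕ Fin q) ℝ) (i : Fin p) (c : Fin q ⊕ Fin q) :
    deriv (fun t : ℝ => Φ (A + t • Matrix.single (Sum.inl i) c 1)) 0
      = deriv (fun t : ℝ => Φ (A + t • Matrix.single (Sum.inr i) c 1)) 0 :=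
  stmt_9_general p q y Ψ Φ hΦ A i c
end

section
/- Let r ∈ ℕ and let dims, dims' : Fin (r+1) → ℕ be the layer widths of two networks. For each k, let w k : Matrix (Fin (dims k)) (Fin (dims (k+1))) ℝ, b k : Fin (dims (k+1)) → ℝ, w' k : Matrix (Fin (dims' k)) (Fin (dims' (k+1))) ℝ, b' k : Fin (dims' (k+1)) → ℝ, and φ k : ℝ → ℝ. Define the networks f, f' as the compositions of the layers a ↦ (fun c => φ k ((Matrix.vecMul a (w k) + b k) c)) and a ↦ (fun c => φ k ((Matrix.vecMul a (w' k) + b' k) c)) respectively, and define the fused network F(f,f') as the composition of the fused layers a ↦ (fun c => φ k ((Matrix.vecMul a (Matrix.fromBlocks (w k) 0 0 (w' k)) + Sum.elim (b k) (b' k)) c)). Then for every input x : Fin (dims 0) → ℝ and x' : Fin (dims' 0) → ℝ, F(f,f') applied to the concatenation Sum.elim x x' equals Sum.elim (f x) (f' x'). -/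
/-- The forward pass of a fully connected network: `a₀ = x` and
`a_{k+1} = φ_k(a_k w_k + b_k)` with the activation applied entrywise.
`forward … k` is the hidden representation after `k` layers. -/
noncomputable def forward (dims : ℕ → ℕ)
    (w : ∀ k : ℕ, Matrix (Fin (dims k)) (Fin (dims (k + 1))) ℝ)
    (b : ∀ k : ℕ, Fin (dims (k + 1)) → ℝ)
    (φ : ℕ → ℝ → ℝ) (x : Fin (dims 0) → ℝ) : ∀ k : ℕ, Fin (dims k) → ℝ
  | 0 => x
  | k + 1 => fun c => φ k ((Matrix.vecMul (forward dims w b φ x k) (w k) + b k) c)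

/-- The forward pass of the deep fusion of two networks: each pair of corresponding
layers is fused by placing the two weight matrices on the diagonal of a block matrix
(zero off-diagonal blocks) and concatenating the biases; the input is the
concatenation `Sum.elim x x'`. -/
noncomputable def fusedForward (dims dims' : ℕ → ℕ)
    (w : ∀ k : ℕ, Matrix (Fin (dims k)) (Fin (dims (k + 1))) ℝ)
    (w' : ∀ k : ℕ, Matrix (Fin (dims' k)) (Fin (dims' (k + 1))) ℝ)
    (b : ∀ k : ℕ, Fin (dims (k + 1)) → ℝ)
    (b' : ∀ k : ℕ, Fin (dims' (k + 1)) → ℝ)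
    (φ : ℕ → ℝ → ℝ) (x : Fin (dims 0) → ℝ) (x' : Fin (dims' 0) → ℝ) :
    ∀ k : ℕ, (Fin (dims k) ⊕ Fin (dims' k)) → ℝ
  | 0 => Sum.elim x x'
  | k + 1 => fun c => φ k
      ((Matrix.vecMul (fusedForward dims dims' w w' b b' φ x x' k)
          (Matrix.fromBlocks (w k) 0 0 (w' k)) + Sum.elim (b k) (b' k)) c)

/-- **Fusion property for deep networks.** The deep fused network of `f` and `f'`,
applied to the concatenated input `Sum.elim x x'`, computes the concatenation
`Sum.elim (f x) (f' x')` of the two original networks' outputs (after `r` layers). -/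
theorem stmt_11 (r : ℕ) (dims dims' : ℕ → ℕ)
    (w : ∀ k : ℕ, Matrix (Fin (dims k)) (Fin (dims (k + 1))) ℝ)
    (w' : ∀ k : ℕ, Matrix (Fin (dims' k)) (Fin (dims' (k + 1))) ℝ)
    (b : ∀ k : ℕ, Fin (dims (k + 1)) → ℝ)
    (b' : ∀ k : ℕ, Fin (dims' (k + 1)) → ℝ)
    (φ : ℕ → ℝ → ℝ) (x : Fin (dims 0) → ℝ) (x' : Fin (dims' 0) → ℝ) :
    fusedForward dims dims' w w' b b' φ x x' r
      = Sum.elim (forward dims w b φ x r) (forward dims' w' b' φ x' r) := by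
  induction r with
  | zero => rfl
  | succ k ih =>
    funext c
    cases c <;>
      simp [fusedForward, forward, ih, Matrix.vecMul_fromBlocks]
end

section
/- Let r ∈ ℕ, let dims : Fin (r+1) → ℕ with the final width k = dims r, and for each layer let w k, b k, φ k be as in a standard network f defined by composing the layers a ↦ (fun c => φ k ((Matrix.vecMul a (w k) + b k) c)). Define the self deep fusion DF(f,f) as the network obtained by fusing each layer of f with itself (block-diagonal weights Matrix.fromBlocks (w k) 0 0 (w k), biases Sum.elim (b k) (b k)), applied to the duplicated input Sum.elim x x, followed by averaging: output c = ((fused output) (Sum.inl c) + (fused output) (Sum.inr c)) / 2. Then for every input x, DF(f,f)(x) = f(x). -/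
lemma fused_eq (dims : ℕ → ℕ)
    (w : ∀ k : ℕ, Matrix (Fin (dims k)) (Fin (dims (k + 1))) ℝ)
    (b : ∀ k : ℕ, Fin (dims (k + 1)) → ℝ)
    (φ : ℕ → ℝ → ℝ) (x : Fin (dims 0) → ℝ) (k : ℕ) :
    fusedForward dims dims w w b b φ x x k
      = Sum.elim (forward dims w b φ x k) (forward dims w b φ x k) := by
  induction k with
  | zero => rfl
  | succ k ih =>
    funext c
    show φ k _ = _
    rw [ih]
    cases c <;>
    simp [forward, Matrix.vecMul_fromBlocks, Function.comp_def]

/-- **Self deep fusion preserves the network function.** Fusing a network `f` with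
itself (duplicated block-diagonal weights, duplicated biases, duplicated input) and
averaging the two halves of the output yields exactly `f(x)` on every input `x`. -/
theorem stmt_12 (r : ℕ) (dims : ℕ → ℕ)
    (w : ∀ k : ℕ, Matrix (Fin (dims k)) (Fin (dims (k + 1))) ℝ)
    (b : ∀ k : ℕ, Fin (dims (k + 1)) → ℝ)
    (φ : ℕ → ℝ → ℝ) (x : Fin (dims 0) → ℝ) :
    (fun c : Fin (dims r) =>
        (fusedForward dims dims w w b b φ x x r (Sum.inl c)
          + fusedForward dims dims w w b b φ x x r (Sum.inr c)) / 2)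
      = forward dims w b φ x r := by
  funext c
  rw [fused_eq]
  simp
end

section
/- Let d_s, m, n ∈ ℕ with n ≥ 1 and write points of (Fin n → EuclideanSpace ℝ (Fin d_s)) × EuclideanSpace ℝ (Fin m) as w = (θ₁,…,θₙ, η). Let L_S : EuclideanSpace ℝ (Fin d_s) → ℝ be twice continuously differentiable and define L₁(w) = (1/n)·∑_{i=1}^n L_S(θᵢ), with F = −gradient L₁. Let L₂ be twice continuously differentiable with G = −gradient L₂, and suppose that for every w the partial gradient of L₂ with respect to each block θᵢ equals the partial gradient of L₁ with respect to θᵢ (so G − F has nonzero component only in the η-direction, equal to −∇_η L₂). Then at every diagonal point w₀ = (θ,…,θ, 0): the Lie bracket [F,G](w₀) = (fderiv ℝ G w₀)(F(w₀)) − (fderiv ℝ F w₀)(G(w₀)) has zero component in every θᵢ-block, and its η-component equals (1/n)·∑_{i=1}^n (the derivative in the θᵢ-direction of the map w ↦ ∇_η L₂(w), evaluated at w₀, applied to gradient L_S θ). -/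
noncomputable section

/-- The parameter space of the big model obtained by self deep fusing a small model
with parameters in `ℝ^{d_s}` `n` times, with extra parameters `η ∈ ℝ^m`:
points `w = (θ₁,…,θₙ,η)`. -/
abbrev Wsp (d_s m n : ℕ) := EuclideanSpace ℝ ((Fin n × Fin d_s) ⊕ Fin m)

/-- The `i`-th parameter block `θᵢ` of a point `w = (θ₁,…,θₙ,η)`. -/
def blk {d_s m n : ℕ} (w : Wsp d_s m n) (i : Fin n) : EuclideanSpace ℝ (Fin d_s) :=
  WithLp.toLp 2 (fun a => w (Sum.inl (i, a)) : Fin d_s → ℝ)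

/-- The `η`-component of a point `w = (θ₁,…,θₙ,η)`. -/
def etaOf {d_s m n : ℕ} (w : Wsp d_s m n) : EuclideanSpace ℝ (Fin m) :=
  WithLp.toLp 2 (fun b => w (Sum.inr b) : Fin m → ℝ)

/-- Replace the `i`-th block of `w` by `θ'`, keeping all other components. -/
def updBlk {d_s m n : ℕ} (w : Wsp d_s m n) (i : Fin n)
    (θ' : EuclideanSpace ℝ (Fin d_s)) : Wsp d_s m n :=
  WithLp.toLp 2 (fun z => Sum.elim (fun p : Fin n × Fin d_s => if p.1 = i then θ' p.2 else w (Sum.inl p))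
    (fun b => w (Sum.inr b)) z : ((Fin n × Fin d_s) ⊕ Fin m) → ℝ)

/-- Replace the `η`-component of `w` by `η'`, keeping the blocks. -/
def updEta {d_s m n : ℕ} (w : Wsp d_s m n) (η' : EuclideanSpace ℝ (Fin m)) :
    Wsp d_s m n :=
  WithLp.toLp 2 (fun z => Sum.elim (fun p : Fin n × Fin d_s => w (Sum.inl p)) (fun b => η' b) z :
    ((Fin n × Fin d_s) ⊕ Fin m) → ℝ)

/-- The tangent vector placing `v` in the `i`-th block (the `θᵢ`-direction). -/
def embedBlk {d_s m n : ℕ} (i : Fin n) (v : EuclideanSpace ℝ (Fin d_s)) :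
    Wsp d_s m n :=
  WithLp.toLp 2 (fun z => Sum.elim (fun p : Fin n × Fin d_s => if p.1 = i then v p.2 else 0)
    (fun _ => (0 : ℝ)) z : ((Fin n × Fin d_s) ⊕ Fin m) → ℝ)

/-- The diagonal point `(θ,…,θ,0)`. -/
def diagPt {d_s m n : ℕ} (θ : EuclideanSpace ℝ (Fin d_s)) : Wsp d_s m n :=
  WithLp.toLp 2 (fun z => Sum.elim (fun p : Fin n × Fin d_s => θ p.2) (fun _ => (0 : ℝ)) z :
    ((Fin n × Fin d_s) ⊕ Fin m) → ℝ)


/-!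
Write `ι : ℝ^m → Wsp d_s m n` for the embedding of the `η`-coordinates and
`P(w) = ∇_η L₂(w)`. Since the block gradients of `L₂` and `L₁` agree and `L₁` does not
depend on `η`, `∇L₂ = ∇L₁ + ι ∘ P`, i.e. `G = F - ι ∘ P`. For the same reason `F` is
constant along `η`-directions, so `DF ∘ ι = 0`, and the bracket collapses to
`[F, G] = DG(F) - DF(G) = -ι (DP(F)) + DF(ι P) = -ι (DP(F))`, which lives in the
`η`-block. At `(θ,…,θ,0)` every block of `F` equals `-(1/n) ∇L_S(θ)`.
-/

section

variable {E F : Type*} [NormedAddCommGroup E] [InnerProductSpace ℝ E] [CompleteSpace E]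
  [NormedAddCommGroup F] [InnerProductSpace ℝ F] [CompleteSpace F]

theorem gradient_comp_const_add_clm (f : F → ℝ) (c : F) (J : E →L[ℝ] F) (x : E)
    (hf : DifferentiableAt ℝ f (c + J x)) :
    gradient (fun y => f (c + J y)) x = J.adjoint (gradient f (c + J x)) := by
  have hcomp : HasFDerivAt (fun y => f (c + J y)) ((fderiv ℝ f (c + J x)).comp J) x :=
    hf.hasFDerivAt.comp x (J.hasFDerivAt.const_add c)
  refine ext_inner_right ℝ fun v => ?_
  rw [inner_gradient_left, hcomp.fderiv, ContinuousLinearMap.adjoint_inner_left,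
    inner_gradient_left, ContinuousLinearMap.comp_apply]

theorem gradient_const_mul_sum_comp_clm {ι : Type*} [Fintype ι] (f : F → ℝ) (c : ℝ)
    (B : ι → E →L[ℝ] F) (x : E) (hf : ∀ i, DifferentiableAt ℝ f (B i x)) :
    gradient (fun y => c * ∑ i, f (B i y)) x
      = c • ∑ i, (B i).adjoint (gradient f (B i x)) := by
  have hsum : HasFDerivAt (fun y => c * ∑ i, f (B i y))
      (c • ∑ i, (fderiv ℝ f (B i x)).comp (B i)) x :=
    (HasFDerivAt.fun_sum fun i _ => (hf i).hasFDerivAt.comp x (B i).hasFDerivAt).const_mul c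
  refine ext_inner_right ℝ fun v => ?_
  simp [inner_gradient_left, hsum.fderiv, inner_smul_left, sum_inner,
    ContinuousLinearMap.adjoint_inner_left]

theorem ContDiff.differentiable_gradient {f : E → ℝ} (hf : ContDiff ℝ 2 f) :
    Differentiable ℝ (gradient f) :=
  (InnerProductSpace.toDual ℝ E).symm.differentiable.comp
    ((hf.fderiv_right (m := 1) le_rfl).differentiable one_ne_zero)

end

section

variable {E V : Type*} [NormedAddCommGroup E] [NormedSpace ℝ E]
  [NormedAddCommGroup V] [NormedSpace ℝ V]

theorem fderiv_apply_eq_zero_of_forall_add_smul {W : Type*} [NormedAddCommGroup W]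
    [NormedSpace ℝ W] {f : E → W} {x u : E} (hf : DifferentiableAt ℝ f x)
    (h : ∀ t : ℝ, f (x + t • u) = f x) :
    fderiv ℝ f x u = 0 := by
  rw [← hf.lineDeriv_eq_fderiv, lineDeriv, funext h, deriv_const]

theorem lieBracket_sub_clm_comp {F : E → E} {Φ : E → V} (J : V →L[ℝ] E) {x : E}
    (hF : DifferentiableAt ℝ F x) (hΦ : DifferentiableAt ℝ Φ x)
    (hJ : ∀ v, fderiv ℝ F x (J v) = 0) :
    VectorField.lieBracket ℝ F (fun y => F y - J (Φ y)) x = -J (fderiv ℝ Φ x (F x)) := by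
  have hJΦ : DifferentiableAt ℝ (fun y => J (Φ y)) x := J.differentiableAt.comp x hΦ
  rw [VectorField.lieBracket, fderiv_fun_sub hF hJΦ,
    fderiv_fun_comp x J.differentiableAt hΦ, map_sub, hJ]
  simp

end

section

variable {d_s m n : ℕ}

def embedEta (v : EuclideanSpace ℝ (Fin m)) : Wsp d_s m n :=
  WithLp.toLp 2 (Sum.elim 0 (fun b => v b))

@[simp] lemma blk_apply (w : Wsp d_s m n) (i : Fin n) (a : Fin d_s) :
    blk w i a = w (Sum.inl (i, a)) := rfl

@[simp] lemma etaOf_apply (w : Wsp d_s m n) (b : Fin m) : etaOf w b = w (Sum.inr b) := rfl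

@[simp] lemma embedBlk_inl (i j : Fin n) (v : EuclideanSpace ℝ (Fin d_s)) (a : Fin d_s) :
    (embedBlk i v : Wsp d_s m n) (Sum.inl (j, a)) = if j = i then v a else 0 := rfl

@[simp] lemma embedBlk_inr (i : Fin n) (v : EuclideanSpace ℝ (Fin d_s)) (b : Fin m) :
    (embedBlk i v : Wsp d_s m n) (Sum.inr b) = 0 := rfl

@[simp] lemma embedEta_inl (v : EuclideanSpace ℝ (Fin m)) (p : Fin n × Fin d_s) :
    (embedEta v : Wsp d_s m n) (Sum.inl p) = 0 := rfl

@[simp] lemma embedEta_inr (v : EuclideanSpace ℝ (Fin m)) (b : Fin m) :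
    (embedEta v : Wsp d_s m n) (Sum.inr b) = v b := rfl

@[simp] lemma updBlk_inl (w : Wsp d_s m n) (i j : Fin n) (θ' : EuclideanSpace ℝ (Fin d_s))
    (a : Fin d_s) : updBlk w i θ' (Sum.inl (j, a)) = if j = i then θ' a else w (Sum.inl (j, a)) :=
  rfl

@[simp] lemma updBlk_inr (w : Wsp d_s m n) (i : Fin n) (θ' : EuclideanSpace ℝ (Fin d_s))
    (b : Fin m) : updBlk w i θ' (Sum.inr b) = w (Sum.inr b) := rfl

@[simp] lemma updEta_inl (w : Wsp d_s m n) (η' : EuclideanSpace ℝ (Fin m))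
    (p : Fin n × Fin d_s) : updEta w η' (Sum.inl p) = w (Sum.inl p) := rfl

@[simp] lemma updEta_inr (w : Wsp d_s m n) (η' : EuclideanSpace ℝ (Fin m)) (b : Fin m) :
    updEta w η' (Sum.inr b) = η' b := rfl

@[simp] lemma blk_diagPt (θ : EuclideanSpace ℝ (Fin d_s)) (i : Fin n) :
    blk (diagPt θ : Wsp d_s m n) i = θ := rfl

def blkL (i : Fin n) : Wsp d_s m n →L[ℝ] EuclideanSpace ℝ (Fin d_s) :=
  LinearMap.toContinuousLinearMap
    { toFun := fun w => blk w i
      map_add' := fun _ _ => rfl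
      map_smul' := fun _ _ => rfl }

def etaOfL : Wsp d_s m n →L[ℝ] EuclideanSpace ℝ (Fin m) :=
  LinearMap.toContinuousLinearMap
    { toFun := etaOf
      map_add' := fun _ _ => rfl
      map_smul' := fun _ _ => rfl }

def embedBlkL (i : Fin n) : EuclideanSpace ℝ (Fin d_s) →L[ℝ] Wsp d_s m n :=
  LinearMap.toContinuousLinearMap
    { toFun := embedBlk i
      map_add' := fun u v => by ext (⟨j, a⟩ | b) <;> simp [apply_ite₂ (· + ·)]
      map_smul' := fun c v => by ext (⟨j, a⟩ | b) <;> simp [mul_ite] }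

def embedEtaL : EuclideanSpace ℝ (Fin m) →L[ℝ] Wsp d_s m n :=
  LinearMap.toContinuousLinearMap
    { toFun := embedEta
      map_add' := fun u v => by ext (⟨j, a⟩ | b) <;> simp
      map_smul' := fun c v => by ext (⟨j, a⟩ | b) <;> simp }

@[simp] lemma blkL_apply (i : Fin n) (w : Wsp d_s m n) : blkL i w = blk w i := rfl
@[simp] lemma etaOfL_apply (w : Wsp d_s m n) : etaOfL w = etaOf w := rfl
@[simp] lemma embedBlkL_apply (i : Fin n) (v : EuclideanSpace ℝ (Fin d_s)) :
    (embedBlkL i v : Wsp d_s m n) = embedBlk i v := rfl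
@[simp] lemma embedEtaL_apply (v : EuclideanSpace ℝ (Fin m)) :
    (embedEtaL v : Wsp d_s m n) = embedEta v := rfl

lemma inner_embedBlk (i : Fin n) (u : EuclideanSpace ℝ (Fin d_s)) (w : Wsp d_s m n) :
    inner ℝ (embedBlk i u) w = inner ℝ u (blk w i) := by
  simp [PiLp.inner_apply, Fintype.sum_sum_type, Fintype.sum_prod_type]

lemma inner_embedEta (v : EuclideanSpace ℝ (Fin m)) (w : Wsp d_s m n) :
    inner ℝ (embedEta v) w = inner ℝ v (etaOf w) := by
  simp [PiLp.inner_apply, Fintype.sum_sum_type]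

lemma adjoint_blkL (i : Fin n) : (blkL i : Wsp d_s m n →L[ℝ] _).adjoint = embedBlkL i :=
  ((ContinuousLinearMap.eq_adjoint_iff _ _).mpr (inner_embedBlk i)).symm

lemma adjoint_etaOfL : (etaOfL : Wsp d_s m n →L[ℝ] _).adjoint = embedEtaL :=
  ((ContinuousLinearMap.eq_adjoint_iff _ _).mpr inner_embedEta).symm

lemma adjoint_embedBlkL (i : Fin n) :
    (embedBlkL i : _ →L[ℝ] Wsp d_s m n).adjoint = blkL i := by
  rw [← adjoint_blkL, ContinuousLinearMap.adjoint_adjoint]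

lemma adjoint_embedEtaL : (embedEtaL : _ →L[ℝ] Wsp d_s m n).adjoint = etaOfL := by
  rw [← adjoint_etaOfL, ContinuousLinearMap.adjoint_adjoint]

lemma updBlk_eq_add (w : Wsp d_s m n) (i : Fin n) (θ' : EuclideanSpace ℝ (Fin d_s)) :
    updBlk w i θ' = updBlk w i 0 + embedBlkL i θ' := by
  ext (⟨j, a⟩ | b) <;> simp [apply_ite₂ (· + ·)]

lemma updBlk_zero_add_embedBlk_blk (w : Wsp d_s m n) (i : Fin n) :
    updBlk w i 0 + embedBlkL i (blk w i) = w := by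
  ext (⟨j, a⟩ | b)
  · by_cases h : j = i <;> simp [h]
  · simp

lemma updEta_eq_add (w : Wsp d_s m n) (η' : EuclideanSpace ℝ (Fin m)) :
    updEta w η' = updEta w 0 + embedEtaL η' := by
  ext (⟨j, a⟩ | b) <;> simp

lemma updEta_zero_add_embedEta_etaOf (w : Wsp d_s m n) :
    updEta w 0 + embedEtaL (etaOf w) = w := by
  ext (⟨j, a⟩ | b) <;> simp

theorem gradient_updBlk {f : Wsp d_s m n → ℝ} {w : Wsp d_s m n} (i : Fin n)
    (hf : DifferentiableAt ℝ f w) :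
    gradient (fun θ' => f (updBlk w i θ')) (blk w i) = blk (gradient f w) i := by
  have hcomp : (fun θ' => f (updBlk w i θ')) = fun θ' => f (updBlk w i 0 + embedBlkL i θ') :=
    funext fun θ' => congrArg f (updBlk_eq_add w i θ')
  rw [hcomp, gradient_comp_const_add_clm, updBlk_zero_add_embedBlk_blk, adjoint_embedBlkL,
    blkL_apply]
  rwa [updBlk_zero_add_embedBlk_blk]

theorem gradient_updEta {f : Wsp d_s m n → ℝ} {w : Wsp d_s m n}
    (hf : DifferentiableAt ℝ f w) :
    gradient (fun η' => f (updEta w η')) (etaOf w) = etaOf (gradient f w) := by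
  have hcomp : (fun η' => f (updEta w η')) = fun η' => f (updEta w 0 + embedEtaL η') :=
    funext fun η' => congrArg f (updEta_eq_add w η')
  rw [hcomp, gradient_comp_const_add_clm, updEta_zero_add_embedEta_etaOf, adjoint_embedEtaL,
    etaOfL_apply]
  rwa [updEta_zero_add_embedEta_etaOf]

theorem eq_add_embedEta_etaOf {u v : Wsp d_s m n} (hblk : ∀ i, blk u i = blk v i)
    (heta : etaOf v = 0) : u = v + embedEta (etaOf u) := by
  ext (⟨i, a⟩ | b)
  · simpa using congrArg (· a) (hblk i)
  · simpa using congrArg (· b) heta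

def fusedLoss (L_S : EuclideanSpace ℝ (Fin d_s) → ℝ) (w : Wsp d_s m n) : ℝ :=
  (1 / (n : ℝ)) * ∑ i, L_S (blk w i)

variable {L_S : EuclideanSpace ℝ (Fin d_s) → ℝ}

theorem gradient_fusedLoss (hLS : Differentiable ℝ L_S) (w : Wsp d_s m n) :
    gradient (fusedLoss L_S) w
      = (1 / (n : ℝ)) • ∑ i, embedBlk i (gradient L_S (blk w i)) := by
  unfold fusedLoss
  simpa [adjoint_blkL] using
    gradient_const_mul_sum_comp_clm L_S (1 / (n : ℝ)) blkL w fun i => hLS _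

theorem etaOf_gradient_fusedLoss (hLS : Differentiable ℝ L_S) (w : Wsp d_s m n) :
    etaOf (gradient (fusedLoss L_S) w) = 0 := by
  ext b
  simp [gradient_fusedLoss hLS]

theorem gradient_fusedLoss_add_embedEta (hLS : Differentiable ℝ L_S) (w : Wsp d_s m n)
    (v : EuclideanSpace ℝ (Fin m)) :
    gradient (fusedLoss L_S) (w + embedEta v) = gradient (fusedLoss L_S) w := by
  simp only [gradient_fusedLoss hLS]
  congr! 4 with i
  ext a
  simp

theorem contDiff_fusedLoss (hLS : ContDiff ℝ 2 L_S) :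
    ContDiff ℝ 2 (fusedLoss L_S : Wsp d_s m n → ℝ) :=
  contDiff_const.mul (ContDiff.sum fun i _ => hLS.comp (blkL i).contDiff)

end

theorem stmt_15_general (d_s m n : ℕ)
    (L_S : EuclideanSpace ℝ (Fin d_s) → ℝ) (hLS : ContDiff ℝ 2 L_S)
    (L₁ : Wsp d_s m n → ℝ)
    (hL₁ : L₁ = fun w => (1 / (n : ℝ)) * ∑ i : Fin n, L_S (blk w i))
    (L₂ : Wsp d_s m n → ℝ) (hL₂ : ContDiff ℝ 2 L₂)
    (F G : Wsp d_s m n → Wsp d_s m n)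
    (hF : F = fun w => -gradient L₁ w) (hG : G = fun w => -gradient L₂ w)
    (hpart : ∀ (w : Wsp d_s m n) (i : Fin n),
      gradient (fun θ' => L₂ (updBlk w i θ')) (blk w i)
        = gradient (fun θ' => L₁ (updBlk w i θ')) (blk w i))
    (θ : EuclideanSpace ℝ (Fin d_s)) :
    (∀ (i : Fin n) (a : Fin d_s),
        (fderiv ℝ G (diagPt θ) (F (diagPt θ))
          - fderiv ℝ F (diagPt θ) (G (diagPt θ))) (Sum.inl (i, a)) = 0)
    ∧ ((fun bc => (fderiv ℝ G (diagPt θ) (F (diagPt θ))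
          - fderiv ℝ F (diagPt θ) (G (diagPt θ))) (Sum.inr bc) : Fin m → ℝ)
        = ((1 / (n : ℝ)) • ∑ i : Fin n,
            fderiv ℝ (fun w => gradient (fun η' => L₂ (updEta w η')) (etaOf w))
              (diagPt θ) (embedBlk i (gradient L_S θ)) : EuclideanSpace ℝ (Fin m))) := by
  change L₁ = fusedLoss L_S at hL₁
  subst hL₁
  set P := fun w => gradient (fun η' => L₂ (updEta w η')) (etaOf w)
  have hLSd : Differentiable ℝ L_S := hLS.differentiable two_ne_zero
  have hL₂d : Differentiable ℝ L₂ := hL₂.differentiable two_ne_zero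
  have hL₁d : Differentiable ℝ (fusedLoss L_S : Wsp d_s m n → ℝ) :=
    (contDiff_fusedLoss hLS).differentiable two_ne_zero
  have hP : P = fun w => etaOfL (gradient L₂ w) := funext fun w => gradient_updEta (hL₂d w)
  have hPd : Differentiable ℝ P := hP ▸ etaOfL.differentiable.comp hL₂.differentiable_gradient
  have hFd : Differentiable ℝ F := hF ▸ (contDiff_fusedLoss hLS).differentiable_gradient.neg
  have hGF : G = fun w => F w - embedEtaL (P w) := by
    subst hF hG
    funext w
    have hblk (i : Fin n) : blk (gradient L₂ w) i = blk (gradient (fusedLoss L_S) w) i := by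
      rw [← gradient_updBlk i (hL₂d w), ← gradient_updBlk i (hL₁d w), hpart]
    rw [eq_add_embedEta_etaOf hblk (etaOf_gradient_fusedLoss hLSd w), neg_add,
      ← sub_eq_add_neg, hP]
    rfl
  have hker (v : EuclideanSpace ℝ (Fin m)) : fderiv ℝ F (diagPt θ) (embedEtaL v) = 0 :=
    fderiv_apply_eq_zero_of_forall_add_smul (hFd _) fun t => by
      rw [← map_smul, embedEtaL_apply]
      simp only [hF, gradient_fusedLoss_add_embedEta hLSd]
  have hbracket :
      fderiv ℝ G (diagPt θ) (F (diagPt θ)) - fderiv ℝ F (diagPt θ) (G (diagPt θ))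
        = -embedEta (fderiv ℝ P (diagPt θ) (F (diagPt θ))) := by
    rw [hGF]; exact lieBracket_sub_clm_comp embedEtaL (hFd _) (hPd _) hker
  have hFdiag : F (diagPt θ) = -((1 / (n : ℝ)) • ∑ i, embedBlk i (gradient L_S θ)) := by
    simp [hF, gradient_fusedLoss hLSd]
  rw [hbracket]
  refine ⟨fun i a => by simp, funext fun b => ?_⟩
  simp [hFdiag, map_sum]

/-- **Non-zero Lie bracket lemma.** With `L₁(w) = (1/n)∑ᵢ L_S(θᵢ)`, `F = −∇L₁`,
`G = −∇L₂`, and the block partial gradients of `L₂` and `L₁` agreeing everywhere, at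
every diagonal point `w₀ = (θ,…,θ,0)` the Lie bracket
`[F,G](w₀) = (∇G(w₀))(F(w₀)) − (∇F(w₀))(G(w₀))` vanishes in every `θᵢ`-block, and its
`η`-component is `(1/n)∑ᵢ (∇_{θᵢ}(∇_η L₂))(w₀)(∇L_S(θ))`. -/
theorem stmt_15 (d_s m n : ℕ) (hn : 1 ≤ n)
    (L_S : EuclideanSpace ℝ (Fin d_s) → ℝ) (hLS : ContDiff ℝ 2 L_S)
    (L₁ : Wsp d_s m n → ℝ)
    (hL₁ : L₁ = fun w => (1 / (n : ℝ)) * ∑ i : Fin n, L_S (blk w i))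
    (L₂ : Wsp d_s m n → ℝ) (hL₂ : ContDiff ℝ 2 L₂)
    (F G : Wsp d_s m n → Wsp d_s m n)
    (hF : F = fun w => -gradient L₁ w) (hG : G = fun w => -gradient L₂ w)
    (hpart : ∀ (w : Wsp d_s m n) (i : Fin n),
      gradient (fun θ' => L₂ (updBlk w i θ')) (blk w i)
        = gradient (fun θ' => L₁ (updBlk w i θ')) (blk w i))
    (θ : EuclideanSpace ℝ (Fin d_s)) :
    (∀ (i : Fin n) (a : Fin d_s),
        (fderiv ℝ G (diagPt θ) (F (diagPt θ))
          - fderiv ℝ F (diagPt θ) (G (diagPt θ))) (Sum.inl (i, a)) = 0)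
    ∧ ((fun bc => (fderiv ℝ G (diagPt θ) (F (diagPt θ))
          - fderiv ℝ F (diagPt θ) (G (diagPt θ))) (Sum.inr bc) : Fin m → ℝ)
        = ((1 / (n : ℝ)) • ∑ i : Fin n,
            fderiv ℝ (fun w => gradient (fun η' => L₂ (updEta w η')) (etaOf w))
              (diagPt θ) (embedBlk i (gradient L_S θ)) : EuclideanSpace ℝ (Fin m))) :=
  stmt_15_general d_s m n L_S hLS L₁ hL₁ L₂ hL₂ F G hF hG hpart θ
end
end
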